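/- (Generalized Margolus–Levitin gate time, after Zieliński–Zych.) Let N ≥ 2, θ ∈ ℝ, V an N×N unitary complex matrix, p ≥ 1 a natural number, and κ > 0 real. Let ψ = V e₀ (e₀ the first standard basis vector), let H be a Hermitian N×N matrix with smallest eigenvalue E₀ satisfying the constraint (⟨ψ, (H − E₀•1)^p ψ⟩)^{1/p} = κ, and let T > 0 satisfy (−i T) • H = (π/2) • (V * (Ô(θ) ⊕ 0_{N−2}) * V†) (so that exp(−i T H) equals the swap gate O_V = V(Ô(θ) ⊕ I_{N−2})V† and (−iT)•H is its logarithm along the trajectory). Then T = π / (κ · 2^{1/p}). In particular for p = 1 this is the Margolus–Levitin time T = π/(2(Ē − E₀)). -/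

import Mathlib

open Matrix Complex

/-- The 2×2 matrix `Ô(θ) = !![0, i·e^{−iθ}; i·e^{iθ}, 0]`. -/
noncomputable def Ohat (θ : ℝ) : Matrix (Fin 2) (Fin 2) ℂ :=
  !![0, Complex.I * Complex.exp (-(Complex.I * (θ : ℂ)));
     Complex.I * Complex.exp (Complex.I * (θ : ℂ)), 0]

/-!
Conjugating by `V` and reindexing, the logarithm condition says `H = c · (iÔ ⊕ 0)` with
`c = π / (2T)`. As `Ô` is anti-Hermitian with `Ô² = −1`, the matrix `B = 1 + iÔ` is Hermitian with
`B² = 2B` and `det B = 0`. Hence `H + c = c · (B ⊕ 1)` is positive semidefinite and singular, so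
`E₀ = −c`, and `(H − E₀)^p = c^p · (2^{p−1} B ⊕ 1)`. Its expectation in `ψ = V e₀` is
`c^p 2^{p−1} = (π/T)^p / 2`, so `κ = (π/T) / 2^{1/p}`.
-/

open scoped ComplexOrder

lemma pow_succ_eq_two_pow_smul_of_mul_self {R : Type*} [Semiring R] {b : R} (h : b * b = 2 • b)
    (q : ℕ) : b ^ (q + 1) = 2 ^ q • b := by
  induction q with
  | zero => simp
  | succ q ih => rw [pow_succ, ih, smul_mul_assoc, h, smul_smul, pow_succ]

namespace Matrix

variable {m n : Type*}

section

variable [DecidableEq m] [DecidableEq n]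

lemma one_add_smul_fromBlocks_zero {α : Type*} [Semiring α] (r : α)
    (X : Matrix n n α) :
    1 + r • fromBlocks X 0 0 (0 : Matrix m m α) = fromBlocks (1 + r • X) 0 0 1 := by
  rw [← fromBlocks_one, fromBlocks_smul, fromBlocks_add]
  simp

variable [Fintype m] [Fintype n]

lemma fromBlocks_zero_pow {α : Type*} [Semiring α]
    (A : Matrix n n α) (D : Matrix m m α) (k : ℕ) :
    fromBlocks A 0 0 D ^ k = fromBlocks (A ^ k) 0 0 (D ^ k) := by
  induction k with
  | zero => simp
  | succ k ih => simp [pow_succ, ih, fromBlocks_multiply]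

lemma star_mulVec_dotProduct_conj_mulVec {α : Type*} [CommSemiring α] [StarRing α]
    {V : Matrix n n α} (hV : star V * V = 1) (X : Matrix n n α) (v w : n → α) :
    star (V *ᵥ v) ⬝ᵥ (V * X * star V) *ᵥ (V *ᵥ w) = star v ⬝ᵥ X *ᵥ w := by
  rw [star_mulVec, mulVec_mulVec, Matrix.mul_assoc (V * X), hV, Matrix.mul_one,
    ← mulVec_mulVec, dotProduct_mulVec, vecMul_vecMul, ← star_eq_conjTranspose, hV, vecMul_one,
    dotProduct_mulVec]

lemma IsHermitian.iInf_eigenvalues_eq_of_posSemidef_of_det_eq_zero {𝕜 : Type*} [RCLike 𝕜]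
    [Nonempty n] {A : Matrix n n 𝕜} (hA : A.IsHermitian) {μ : ℝ} (hpos : (A - μ • 1).PosSemidef)
    (hdet : (A - μ • 1).det = 0) :
    ⨅ i, hA.eigenvalues i = μ := by
  have h := hA.conjStarAlgAut_star_eigenvectorUnitary
  simp only [Unitary.conjStarAlgAut_apply, Unitary.coe_star, star_star] at h
  set U : Matrix n n 𝕜 := (hA.eigenvectorUnitary : Matrix n n 𝕜)
  have hdiag : Uᴴ * (A - μ • 1) * U = diagonal fun i ↦ ((hA.eigenvalues i - μ : ℝ) : 𝕜) := by
    rw [← star_eq_conjTranspose, mul_sub, sub_mul, h, mul_smul_comm, smul_mul_assoc, mul_one,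
      Unitary.coe_star_mul_self, ← diagonal_one, ← diagonal_smul, diagonal_sub]
    congr 1
    ext i
    simp [RCLike.real_smul_eq_coe_mul]
  have hpos' := hpos.conjTranspose_mul_mul_same U
  rw [hdiag, posSemidef_diagonal_iff] at hpos'
  have hdet' : (Uᴴ * (A - μ • 1) * U).det = 0 := by rw [det_mul, det_mul, hdet]; simp
  rw [hdiag, det_diagonal, Finset.prod_eq_zero_iff] at hdet'
  obtain ⟨j, -, hj⟩ := hdet'
  refine le_antisymm (ciInf_le_of_le (Set.finite_range _).bddBelow j ?_) (le_ciInf fun i ↦ ?_)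
  · rw [RCLike.ofReal_eq_zero, sub_eq_zero] at hj
    exact hj.le
  · simpa using hpos' i

end

lemma PosSemidef.fromBlocks_zero_one {𝕜 : Type*} [RCLike 𝕜] [Fintype m] [DecidableEq m] [Fintype n]
    {A : Matrix n n 𝕜} (hA : A.PosSemidef) : (fromBlocks A 0 0 (1 : Matrix m m 𝕜)).PosSemidef := by
  let := invertibleOne (α := Matrix m m 𝕜)
  simpa using (PosDef.fromBlocks₂₂ A (0 : Matrix n m 𝕜) PosDef.one).mpr (by simpa using hA)

section

variable [Fintype m] [DecidableEq m] [Fintype n] [DecidableEq n]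

noncomputable def conjReindex (e : m ≃ n) (U : unitaryGroup n ℂ) :
    Matrix m m ℂ ≃ₐ[ℂ] Matrix n n ℂ :=
  (reindexAlgEquiv ℂ ℂ e).trans (Unitary.conjStarAlgAut ℂ _ U).toAlgEquiv

variable (e : m ≃ n) (U : unitaryGroup n ℂ)

lemma conjReindex_apply (X : Matrix m m ℂ) :
    conjReindex e U X = U * reindex e e X * star (U : Matrix n n ℂ) :=
  rfl

lemma PosSemidef.conjReindex {X : Matrix m m ℂ} (hX : X.PosSemidef) :
    (conjReindex e U X).PosSemidef :=
  (hX.submatrix e.symm).mul_mul_conjTranspose_same _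

lemma det_conjReindex (X : Matrix m m ℂ) : (conjReindex e U X).det = X.det := by
  rw [conjReindex_apply, det_mul, det_mul, mul_right_comm, ← det_mul,
    Unitary.mul_star_self_of_mem U.2, det_one, one_mul, det_reindex_self]

lemma star_mulVec_dotProduct_conjReindex_mulVec (X : Matrix m m ℂ) (i : m) :
    star (U *ᵥ Pi.single (e i) 1) ⬝ᵥ conjReindex e U X *ᵥ (U *ᵥ Pi.single (e i) 1) = X i i := by
  rw [conjReindex_apply, star_mulVec_dotProduct_conj_mulVec (Unitary.coe_star_mul_self U),
    mulVec_single_one, ← Pi.single_star, star_one, single_dotProduct, one_mul]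
  simp

end

end Matrix

section

variable {n : Type*} [DecidableEq n] {X : Matrix n n ℂ}

lemma isHermitian_one_add_I_smul (hX : Xᴴ = -X) : (1 + I • X).IsHermitian := by
  simp [IsHermitian, conjTranspose_add, conjTranspose_smul, hX]

variable [Fintype n]

lemma one_add_I_smul_mul_self (hX : X * X = -1) : (1 + I • X) * (1 + I • X) = 2 • (1 + I • X) := by
  simp only [mul_add, add_mul, mul_one, one_mul, smul_mul_smul_comm, I_mul_I, hX]
  module

lemma posSemidef_one_add_I_smul (hX₁ : Xᴴ = -X) (hX₂ : X * X = -1) : (1 + I • X).PosSemidef := by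
  have h : 1 + I • X = (1 / 2 : ℝ) • ((1 + I • X)ᴴ * (1 + I • X)) := by
    rw [(isHermitian_one_add_I_smul hX₁).eq, one_add_I_smul_mul_self hX₂,
      ← Nat.cast_smul_eq_nsmul ℝ, smul_smul]
    norm_num
  rw [h]
  exact (posSemidef_conjTranspose_mul_self _).smul (by norm_num)

end

lemma Ohat_mul_self (θ : ℝ) : Ohat θ * Ohat θ = -1 := by
  ext i j
  fin_cases i <;> fin_cases j <;>
    simp [Ohat, mul_apply, Fin.sum_univ_two, exp_neg, mul_mul_mul_comm I, exp_ne_zero]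

lemma conjTranspose_Ohat (θ : ℝ) : (Ohat θ)ᴴ = -Ohat θ := by
  ext i j
  fin_cases i <;> fin_cases j <;> simp [Ohat, ← exp_conj, map_neg]

lemma det_one_add_I_smul_Ohat (θ : ℝ) : (1 + I • Ohat θ).det = 0 := by
  simp [det_fin_two, Ohat, exp_neg, ← mul_assoc, exp_ne_zero]

section

variable {k n : Type*} [Fintype k] [DecidableEq k] [Fintype n] [DecidableEq n]
  (e : Fin 2 ⊕ k ≃ n) (U : unitaryGroup n ℂ) (θ : ℝ)

lemma posSemidef_conjReindex_fromBlocks_Ohat :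
    (conjReindex e U (fromBlocks (1 + I • Ohat θ) 0 0 (1 : Matrix k k ℂ))).PosSemidef :=
  (posSemidef_one_add_I_smul (conjTranspose_Ohat θ) (Ohat_mul_self θ)).fromBlocks_zero_one
    |>.conjReindex e U

lemma det_conjReindex_fromBlocks_Ohat :
    (conjReindex e U (fromBlocks (1 + I • Ohat θ) 0 0 (1 : Matrix k k ℂ))).det = 0 := by
  rw [det_conjReindex, det_fromBlocks_zero₂₁, det_one_add_I_smul_Ohat, zero_mul]

lemma star_mulVec_dotProduct_pow_conjReindex_fromBlocks_Ohat_mulVec (q : ℕ) :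
    star (U *ᵥ Pi.single (e (Sum.inl 0)) 1) ⬝ᵥ
      conjReindex e U (fromBlocks (1 + I • Ohat θ) 0 0 (1 : Matrix k k ℂ)) ^ (q + 1) *ᵥ
        (U *ᵥ Pi.single (e (Sum.inl 0)) 1) = 2 ^ q := by
  rw [← map_pow, fromBlocks_zero_pow,
    pow_succ_eq_two_pow_smul_of_mul_self (one_add_I_smul_mul_self (Ohat_mul_self θ)),
    star_mulVec_dotProduct_conjReindex_mulVec, fromBlocks_apply₁₁, Matrix.smul_apply]
  simp [Ohat]

end

lemma eq_I_mul_smul_of_neg_I_mul_smul_eq {M : Type*} [AddCommGroup M] [Module ℂ M] {T a : ℝ}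
    (hT : T ≠ 0) {x y : M} (h : (-I * T) • x = a • y) : x = (I * (a / T : ℝ)) • y := by
  have hT' : (T : ℂ) ≠ 0 := ofReal_ne_zero.mpr hT
  refine smul_right_injective M (mul_ne_zero (neg_ne_zero.mpr I_ne_zero) hT') ?_
  dsimp only
  rw [h, smul_smul, ← coe_smul]
  congr 1
  push_cast
  field_simp
  linear_combination (a : ℂ) * I_sq

lemma Real.pow_succ_mul_two_pow_rpow_one_div {c : ℝ} (hc : 0 ≤ c) (q : ℕ) :
    (c ^ (q + 1) * 2 ^ q) ^ (1 / ((q + 1 : ℕ) : ℝ)) = 2 * c / 2 ^ (1 / ((q + 1 : ℕ) : ℝ)) := by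
  have h : c ^ (q + 1) * 2 ^ q = (2 * c) ^ (q + 1) / 2 := by
    rw [mul_pow, pow_succ 2]
    field_simp
  rw [h, Real.div_rpow (by positivity) zero_le_two, one_div,
    Real.pow_rpow_inv_natCast (by positivity) q.succ_ne_zero]

/-- Generalized Margolus–Levitin gate time (after Zieliński–Zych): if a
time-independent Hamiltonian `H` constrained so that its `p`-th fractional moment in
the state `ψ = V e₀` equals `κ` implements the swap gate `O_V = V (Ô(θ) ⊕ I) V†` at
time `T > 0` (i.e. `(−iT)•H` is the given logarithm of `O_V`), then
`T = π/(κ · 2^{1/p})`. -/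
theorem generalized_margolus_levitin_gate_time
    {N : ℕ} (hN : 2 ≤ N) (θ : ℝ) (V : Matrix (Fin N) (Fin N) ℂ) (hV : V * Vᴴ = 1)
    (p : ℕ) (hp : 1 ≤ p) (κ : ℝ)
    (ψ : Fin N → ℂ)
    (hψ : ψ = V *ᵥ Pi.single (⟨0, by omega⟩ : Fin N) 1)
    (H : Matrix (Fin N) (Fin N) ℂ) (hH : H.IsHermitian)
    (hconstraint :
      ((star ψ ⬝ᵥ ((H - (⨅ i, hH.eigenvalues i : ℝ) • (1 : Matrix (Fin N) (Fin N) ℂ)) ^ p *ᵥ ψ)).re)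
          ^ (1 / (p : ℝ)) = κ)
    (T : ℝ) (hT : 0 < T)
    (hlog : ((-Complex.I) * (T : ℂ)) • H = (Real.pi / 2 : ℝ) •
        (V * (Matrix.reindex (finSumFinEquiv.trans (finCongr (Nat.add_sub_cancel' hN)))
                (finSumFinEquiv.trans (finCongr (Nat.add_sub_cancel' hN)))
                (Matrix.fromBlocks (Ohat θ) 0 0 (0 : Matrix (Fin (N - 2)) (Fin (N - 2)) ℂ))) * Vᴴ)) :
    T = Real.pi / (κ * (2 : ℝ) ^ (1 / (p : ℝ))) := by
  obtain ⟨q, rfl⟩ : ∃ q, p = q + 1 := ⟨p - 1, by omega⟩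
  set e := finSumFinEquiv.trans (finCongr (Nat.add_sub_cancel' hN))
  let u : unitaryGroup (Fin N) ℂ := ⟨V, mem_unitaryGroup_iff.mpr hV⟩
  have hψu : ψ = (u : Matrix (Fin N) (Fin N) ℂ) *ᵥ Pi.single (e (Sum.inl 0)) 1 := by
    have he : (⟨0, by omega⟩ : Fin N) = e (Sum.inl 0) := by ext; simp [e]
    rw [hψ, he]
  set c : ℝ := Real.pi / 2 / T
  have hH_eq : H = (I * c) • conjReindex e u (fromBlocks (Ohat θ) 0 0 0) :=
    eq_I_mul_smul_of_neg_I_mul_smul_eq hT.ne' hlog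
  have hshift : H - (-c) • 1 = c • conjReindex e u (fromBlocks (1 + I • Ohat θ) 0 0 1) := by
    rw [← one_add_smul_fromBlocks_zero, map_add, map_one, map_smul, hH_eq]
    module
  have hE₀ : ⨅ i, hH.eigenvalues i = -c := by
    have : Nonempty (Fin N) := ⟨⟨0, by omega⟩⟩
    refine hH.iInf_eigenvalues_eq_of_posSemidef_of_det_eq_zero ?_ ?_ <;> rw [hshift]
    · exact (posSemidef_conjReindex_fromBlocks_Ohat e u θ).smul (by positivity)
    · rw [← coe_smul, det_smul, det_conjReindex_fromBlocks_Ohat, mul_zero]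
  have hmoment : (star ψ ⬝ᵥ ((H - (-c) • 1) ^ (q + 1) *ᵥ ψ)).re = c ^ (q + 1) * 2 ^ q := by
    rw [hshift, smul_pow, smul_mulVec, dotProduct_smul, hψu,
      star_mulVec_dotProduct_pow_conjReindex_fromBlocks_Ohat_mulVec, smul_re, smul_eq_mul]
    norm_cast
  rw [hE₀, hmoment, Real.pow_succ_mul_two_pow_rpow_one_div (by positivity)] at hconstraint
  rw [← hconstraint]
  simp only [c]
  field_simp
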